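/- arXiv:0810.1539 — 3 statements merged into one kernel-verified Lean document; each statement's English description precedes it below -/
import Mathlib

section
/- Let Δ be a (d−1)-dimensional simplicial complex with d ≥ 2 that is pure and such that lk_Δ F is connected for every face F ∈ Δ with 0 ≤ |F| < d−1 (including the empty face). Then for every face σ ∈ Δ, the closed star st̄_Δ σ is strongly connected: for any two facets F and F′ of st̄_Δ σ there is a chain of facets F = F_0, F_1, …, F_m = F′ of st̄_Δ σ such that |F_i ∩ F_{i+1}| = d−1 for all i. -/
/-- `Δ` is an (abstract) simplicial complex on the (finite) vertex set `V`:
faces are closed under taking subsets and every singleton is a face. -/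
def IsComplex {V : Type*} [DecidableEq V] (Δ : Set (Finset V)) : Prop :=
  (∀ F ∈ Δ, ∀ G, G ⊆ F → G ∈ Δ) ∧ ∀ v : V, ({v} : Finset V) ∈ Δ

/-- `F` is a facet (maximal face) of the collection of faces `Δ`. -/
def IsFacet {V : Type*} (Δ : Set (Finset V)) (F : Finset V) : Prop :=
  F ∈ Δ ∧ ∀ G ∈ Δ, F ⊆ G → G = F

/-- Every facet has `d` vertices, i.e. dimension `d - 1`. -/
def IsPure {V : Type*} (Δ : Set (Finset V)) (d : ℕ) : Prop :=
  ∀ F, IsFacet Δ F → F.card = d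

/-- `Δ` has dimension `d - 1`: all faces have at most `d` vertices and some face has `d`. -/
def HasDim {V : Type*} (Δ : Set (Finset V)) (d : ℕ) : Prop :=
  (∀ F ∈ Δ, F.card ≤ d) ∧ ∃ F ∈ Δ, F.card = d

/-- The link of the face `F`. -/
def link {V : Type*} [DecidableEq V] (Δ : Set (Finset V)) (F : Finset V) : Set (Finset V) :=
  {G | G ∈ Δ ∧ Disjoint F G ∧ F ∪ G ∈ Δ}

/-- The closed star of the face `F`. -/
def closedStar {V : Type*} [DecidableEq V] (Δ : Set (Finset V)) (F : Finset V) :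
    Set (Finset V) :=
  {G | G ∈ Δ ∧ F ∪ G ∈ Δ}

/-- The collection of faces `K` is connected: any two of its vertices are joined by a
walk along its `1`-dimensional faces. -/
def Conn {V : Type*} [DecidableEq V] (K : Set (Finset V)) : Prop :=
  ∀ v w : V, ({v} : Finset V) ∈ K → ({w} : Finset V) ∈ K →
    Relation.ReflTransGen (fun a b => ({a, b} : Finset V) ∈ K) v w

/-- Property (III): the link of every face with fewer than `d - 1` vertices
(including the empty face) is connected. -/
def LinksConn {V : Type*} [DecidableEq V] (Δ : Set (Finset V)) (d : ℕ) : Prop :=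
  ∀ F ∈ Δ, F.card < d - 1 → Conn (link Δ F)

/-- Property (II): `Δ` is balanced with respect to the coloring `κ`:
the coloring is injective on every face. -/
def IsBalanced {V : Type*} {d : ℕ} (Δ : Set (Finset V)) (κ : V → Fin d) : Prop :=
  ∀ F ∈ Δ, Set.InjOn κ ↑F

/-- The rank-selected subcomplex `Δ_S`. -/
def rankSel {V : Type*} {d : ℕ} (Δ : Set (Finset V)) (κ : V → Fin d) (S : Finset (Fin d)) :
    Set (Finset V) :=
  {F | F ∈ Δ ∧ ∀ v ∈ F, κ v ∈ S}

/-- `Δ` is strongly connected: any two facets are joined by a chain of facets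
in which consecutive facets share `d - 1` vertices. -/
def StronglyConnected {V : Type*} [DecidableEq V] (Δ : Set (Finset V)) (d : ℕ) : Prop :=
  ∀ F F', IsFacet Δ F → IsFacet Δ F' →
    Relation.ReflTransGen
      (fun A B => IsFacet Δ A ∧ IsFacet Δ B ∧ (A ∩ B).card = d - 1) F F'

/-! Downward induction on `σ`. If `|σ| ≥ d - 1`, two distinct facets containing `σ` already
share `d - 1` vertices. Otherwise pick `v ∈ F \ σ`, `w ∈ F' \ σ` and a walk
`v = a₀, a₁, …, aₖ = w` in `lk σ`; choosing a facet `Gᵢ ⊇ σ ∪ {aᵢ, aᵢ₊₁}`, consecutive facets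
of the sequence `F, G₀, …, Gₖ₋₁, F'` all contain some `σ ∪ {aᵢ}`, so they are joined inside
`st̄ (σ ∪ {aᵢ}) ⊆ st̄ σ` by the induction hypothesis. -/

theorem exists_isFacet_superset {V : Type*} [Finite V] {Δ : Set (Finset V)} {F : Finset V}
    (hF : F ∈ Δ) : ∃ G, IsFacet Δ G ∧ F ⊆ G := by
  obtain ⟨G, hFG, hG⟩ := (Set.toFinite Δ).exists_le_maximal hF
  exact ⟨G, ⟨hG.prop, fun H hH hGH => le_antisymm (hG.2 hH hGH) hGH⟩, hFG⟩

section

variable {V : Type*} [DecidableEq V] {Δ : Set (Finset V)} {d : ℕ} {σ τ A B F F' : Finset V}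

def FacetAdj (K : Set (Finset V)) (d : ℕ) (A B : Finset V) : Prop :=
  IsFacet K A ∧ IsFacet K B ∧ (A ∩ B).card = d - 1

theorem isFacet_closedStar_iff : IsFacet (closedStar Δ σ) F ↔ IsFacet Δ F ∧ σ ⊆ F := by
  constructor
  · rintro ⟨⟨hFΔ, hσF⟩, hmax⟩
    have hσF' : σ ⊆ F := by
      rw [← hmax (σ ∪ F) ⟨hσF, by rwa [← Finset.union_assoc, Finset.union_self]⟩
        Finset.subset_union_right]
      exact Finset.subset_union_left
    refine ⟨⟨hFΔ, fun H hH hFH => hmax H ⟨hH, ?_⟩ hFH⟩, hσF'⟩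
    rwa [Finset.union_eq_right.mpr (hσF'.trans hFH)]
  · rintro ⟨⟨hFΔ, hmax⟩, hσF⟩
    exact ⟨⟨hFΔ, by rwa [Finset.union_eq_right.mpr hσF]⟩, fun H hH hFH => hmax H hH.1 hFH⟩

theorem FacetAdj.closedStar_anti (hστ : σ ⊆ τ) (h : FacetAdj (closedStar Δ τ) d A B) :
    FacetAdj (closedStar Δ σ) d A B := by
  obtain ⟨hA, hB, hcard⟩ := h
  rw [isFacet_closedStar_iff] at hA hB
  exact ⟨isFacet_closedStar_iff.mpr ⟨hA.1, hστ.trans hA.2⟩,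
    isFacet_closedStar_iff.mpr ⟨hB.1, hστ.trans hB.2⟩, hcard⟩

theorem singleton_mem_link (hcplx : IsComplex Δ) (hF : F ∈ Δ) (hσF : σ ⊆ F) {v : V}
    (hvF : v ∈ F) (hvσ : v ∉ σ) : ({v} : Finset V) ∈ link Δ σ :=
  ⟨hcplx.2 v, Finset.disjoint_singleton_right.mpr hvσ,
    hcplx.1 F hF _ (Finset.union_subset hσF (Finset.singleton_subset_iff.mpr hvF))⟩

theorem stronglyConnected_closedStar_of_le_card (hI : IsPure Δ d) (hσ : d - 1 ≤ σ.card) :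
    StronglyConnected (closedStar Δ σ) d := by
  intro F F' hF hF'
  by_cases hFF' : F = F'
  · rw [hFF']
  refine .single ⟨hF, hF', ?_⟩
  rw [isFacet_closedStar_iff] at hF hF'
  have hσFF' : σ.card ≤ (F ∩ F').card :=
    Finset.card_le_card (Finset.subset_inter hF.2 hF'.2)
  have hFF'F : F ∩ F' ⊂ F := by
    refine Finset.inter_subset_left.ssubset_of_ne fun h => hFF' ?_
    exact (hF.1.2 F' hF'.1.1 (Finset.inter_eq_left.mp h)).symm
  have := Finset.card_lt_card hFF'F
  have := hI F hF.1
  omega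

theorem StronglyConnected.reflTransGen_of_superset
    (h : StronglyConnected (closedStar Δ τ) d) (hστ : σ ⊆ τ)
    (hA : IsFacet Δ A) (hτA : τ ⊆ A) (hB : IsFacet Δ B) (hτB : τ ⊆ B) :
    Relation.ReflTransGen (FacetAdj (closedStar Δ σ) d) A B :=
  Relation.ReflTransGen.mono (fun _ _ => FacetAdj.closedStar_anti hστ) A B
    (h A B (isFacet_closedStar_iff.mpr ⟨hA, hτA⟩) (isFacet_closedStar_iff.mpr ⟨hB, hτB⟩))

theorem reflTransGen_facetAdj_of_reflTransGen_link [Finite V] (hcplx : IsComplex Δ)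
    (hIH : ∀ x ∉ σ, insert x σ ∈ Δ → StronglyConnected (closedStar Δ (insert x σ)) d)
    {a b : V}
    (hwalk : Relation.ReflTransGen (fun a b => ({a, b} : Finset V) ∈ link Δ σ) a b)
    (ha : a ∉ σ) (hA : IsFacet Δ A) (haA : insert a σ ⊆ A)
    (hB : IsFacet Δ B) (hbB : insert b σ ⊆ B) :
    Relation.ReflTransGen (FacetAdj (closedStar Δ σ) d) A B := by
  induction hwalk using Relation.ReflTransGen.head_induction_on generalizing A with
  | refl =>
    exact (hIH b ha (hcplx.1 A hA.1 _ haA)).reflTransGen_of_superset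
      (Finset.subset_insert b σ) hA haA hB hbB
  | @head a c hac _ ih =>
    obtain ⟨-, hdisj, hσac⟩ := hac
    have hc : c ∉ σ := Finset.disjoint_right.mp hdisj (by simp)
    obtain ⟨G, hG, hσacG⟩ := exists_isFacet_superset hσac
    have haG : insert a σ ⊆ G :=
      Finset.insert_subset (hσacG (by simp)) (Finset.subset_union_left.trans hσacG)
    have hcG : insert c σ ⊆ G :=
      Finset.insert_subset (hσacG (by simp)) (Finset.subset_union_left.trans hσacG)
    exact ((hIH a ha (hcplx.1 A hA.1 _ haA)).reflTransGen_of_superset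
      (Finset.subset_insert a σ) hA haA hG haG).trans (ih hc hG hcG)

theorem stronglyConnected_closedStar_of_forall_insert [Finite V] (hcplx : IsComplex Δ)
    (hIH : ∀ x ∉ σ, insert x σ ∈ Δ → StronglyConnected (closedStar Δ (insert x σ)) d)
    (hI : IsPure Δ d) (hσ : σ.card < d)
    (hlink : Conn (link Δ σ)) : StronglyConnected (closedStar Δ σ) d := by
  intro F F' hF hF'
  rw [isFacet_closedStar_iff] at hF hF'
  obtain ⟨v, hvF, hvσ⟩ :=
    Finset.exists_mem_notMem_of_card_lt_card (hσ.trans_eq (hI F hF.1).symm)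
  obtain ⟨w, hwF', hwσ⟩ :=
    Finset.exists_mem_notMem_of_card_lt_card (hσ.trans_eq (hI F' hF'.1).symm)
  exact reflTransGen_facetAdj_of_reflTransGen_link hcplx hIH
    (hlink v w (singleton_mem_link hcplx hF.1.1 hF.2 hvF hvσ)
      (singleton_mem_link hcplx hF'.1.1 hF'.2 hwF' hwσ))
    hvσ hF.1 (Finset.insert_subset hvF hF.2) hF'.1 (Finset.insert_subset hwF' hF'.2)

end

theorem closedStar_stronglyConnected_general {V : Type*} [Fintype V] [DecidableEq V] (d : ℕ)
    (Δ : Set (Finset V))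
    (hcplx : IsComplex Δ)
    (hI : IsPure Δ d) (hIII : LinksConn Δ d)
    (σ : Finset V) (hσ : σ ∈ Δ) :
    StronglyConnected (closedStar Δ σ) d := by
  induction σ using WellFoundedGT.induction with
  | _ σ IH =>
  rcases le_or_gt (d - 1) σ.card with hσd | hσd
  · exact stronglyConnected_closedStar_of_le_card hI hσd
  · exact stronglyConnected_closedStar_of_forall_insert hcplx
      (fun x hx hxσ => IH _ (Finset.ssubset_insert hx) hxσ) hI (by omega) (hIII σ hσ hσd)

/-- If `Δ` is a pure `(d-1)`-dimensional simplicial complex, `d ≥ 2`,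
all of whose links of faces with fewer than `d - 1` vertices (including the empty face)
are connected, then the closed star of every face of `Δ` is strongly connected. -/
theorem closedStar_stronglyConnected {V : Type*} [Fintype V] [DecidableEq V] (d : ℕ)
    (hd : 2 ≤ d) (Δ : Set (Finset V))
    (hcplx : IsComplex Δ) (hdim : HasDim Δ d)
    (hI : IsPure Δ d) (hIII : LinksConn Δ d)
    (σ : Finset V) (hσ : σ ∈ Δ) :
    StronglyConnected (closedStar Δ σ) d :=
  closedStar_stronglyConnected_general d Δ hcplx hI hIII σ hσ
end

section
/- Let Δ be a (d−1)-dimensional simplicial complex with d ≥ 2 satisfying properties (I)–(III), and let S ⊆ {1,…,d} with |S| = 2. If v and v′ are vertices of the rank-selected subcomplex Δ_S, then every edge path in Δ from v to v′ is equivalent to an edge path from v to v′ all of whose edges lie in Δ_S. -/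
/-- An edge path in `Δ`, encoded by its (nonempty, length `≥ 2`) list of vertices:
consecutive vertices span a face of `Δ` (possibly a repeated vertex, giving a
degenerate edge). -/
def IsEdgePath {V : Type*} [DecidableEq V] (Δ : Set (Finset V)) (γ : List V) : Prop :=
  2 ≤ γ.length ∧ List.Chain' (fun a b => ({a, b} : Finset V) ∈ Δ) γ

/-- An edge path in `Δ` from `v` to `w`. -/
def EdgePathFrom {V : Type*} [DecidableEq V] (Δ : Set (Finset V)) (γ : List V) (v w : V) :
    Prop :=
  IsEdgePath Δ γ ∧ γ.head? = some v ∧ γ.getLast? = some w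

/-- Simple equivalence of edge paths: a segment `(x,y)(y,z)` is replaced by the single
edge `(x,z)` (with arbitrary, possibly empty, prefix and suffix), where the not
necessarily distinct vertices `x, y, z` satisfy `{x, y, z} ∈ Δ`. -/
inductive SimpleEquiv {V : Type*} [DecidableEq V] (Δ : Set (Finset V)) :
    List V → List V → Prop
  | contract (a b : List V) (x y z : V) :
      ({x, y, z} : Finset V) ∈ Δ →
      SimpleEquiv Δ (a ++ x :: y :: z :: b) (a ++ x :: z :: b)

/-- Equivalence of edge paths: the reflexive-symmetric-transitive closure of
simple equivalence. -/
def EdgeEquiv {V : Type*} [DecidableEq V] (Δ : Set (Finset V)) : List V → List V → Prop :=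
  Relation.EqvGen (SimpleEquiv Δ)

/-!
To remove a colour `c ∉ S` from an edge path, replace each vertex `u` of colour `c`, between
its neighbours `x` and `y`, by a path from `x` to `y` in the link of `u`. Since at least three
colours (those of `S` and `c`) are present, the link is connected by (III), and by balancedness
it has no vertex of colour `c`; every edge `(x', w)` of the detour spans a triangle with `u`, so
the new path is equivalent to the old one. To repeat this with the next colour, the
rank-selected complex must satisfy (II) and (III) again: its links are rank selections of links
of `Δ`, which are connected by the same detour argument one dimension lower.
-/

open Relation

theorem Relation.EqvGen.map {α β : Type*} {r : α → α → Prop} {s : β → β → Prop} (f : α → β)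
    (h : ∀ a b, r a b → s (f a) (f b)) {a b : α} (hab : EqvGen r a b) : EqvGen s (f a) (f b) := by
  induction hab with
  | rel a b hr => exact .rel _ _ (h a b hr)
  | refl a => exact .refl _
  | symm a b _ ih => exact .symm _ _ ih
  | trans a b c _ _ ihab ihbc => exact .trans _ _ _ ihab ihbc

theorem Relation.EqvGen.eq_of_forall_rel_eq {α β : Type*} {r : α → α → Prop} (f : α → β)
    (h : ∀ a b, r a b → f a = f b) {a b : α} (hab : EqvGen r a b) : f a = f b :=
  eq_equivalence.eqvGen_iff.1 (hab.map f h)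

section Complex

variable {V : Type*} {d : ℕ} {κ : V → Fin d} {Γ : Set (Finset V)}

theorem rankSel_rankSel {U S : Finset (Fin d)} (hSU : S ⊆ U) :
    rankSel (rankSel Γ κ U) κ S = rankSel Γ κ S := by
  ext F
  exact ⟨fun ⟨⟨hF, _⟩, hS⟩ => ⟨hF, hS⟩, fun ⟨hF, hS⟩ => ⟨⟨hF, fun x hx => hSU (hS x hx)⟩, hS⟩⟩

theorem rankSel_inter_of_color_mem {U T : Finset (Fin d)} (hT : ∀ F ∈ Γ, ∀ x ∈ F, κ x ∈ T) :
    rankSel Γ κ (U ∩ T) = rankSel Γ κ U := by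
  ext F
  simp only [rankSel, Set.mem_ofPred_eq, Finset.mem_inter]
  exact ⟨fun ⟨hF, h⟩ => ⟨hF, fun x hx => (h x hx).1⟩,
    fun ⟨hF, h⟩ => ⟨hF, fun x hx => ⟨h x hx, hT F hF x hx⟩⟩⟩

variable [DecidableEq V]

theorem link_empty : link Γ ∅ = Γ := by
  ext G
  simp [link]

theorem link_link (hdown : ∀ F ∈ Γ, ∀ G ⊆ F, G ∈ Γ) {F G : Finset V} (hG : G ∈ link Γ F) :
    link (link Γ F) G = link Γ (F ∪ G) := by
  obtain ⟨-, hFG, -⟩ := hG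
  ext H
  simp only [link, Set.mem_ofPred_eq, Finset.disjoint_union_left, Finset.disjoint_union_right,
    ← Finset.union_assoc]
  constructor
  · rintro ⟨⟨hH, hFH, -⟩, hGH, -, -, hFGH⟩
    exact ⟨hH, ⟨hFH, hGH⟩, hFGH⟩
  · rintro ⟨hH, ⟨hFH, hGH⟩, hFGH⟩
    have hGH_mem : G ∪ H ∈ Γ := hdown _ hFGH _ (by grind)
    exact ⟨⟨hH, hFH, hdown _ hFGH _ (by grind)⟩, hGH, hGH_mem, ⟨hFG, hFH⟩, hFGH⟩

theorem singleton_mem_link_singleton (hdown : ∀ F ∈ Γ, ∀ G ⊆ F, G ∈ Γ) {x u : V} (hxu : x ≠ u)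
    (h : ({x, u} : Finset V) ∈ Γ) : ({x} : Finset V) ∈ link Γ {u} :=
  ⟨hdown _ h _ (by simp), Finset.disjoint_singleton.2 hxu.symm,
    by rwa [Finset.union_comm, ← Finset.insert_eq]⟩

theorem link_rankSel {U : Finset (Fin d)} {F : Finset V} (hF : F ∈ rankSel Γ κ U) :
    link (rankSel Γ κ U) F = rankSel (link Γ F) κ U := by
  ext H
  simp only [link, rankSel, Set.mem_ofPred_eq, Finset.mem_union]
  constructor
  · rintro ⟨⟨hH, hHU⟩, hFH, hFH_mem, -⟩
    exact ⟨⟨hH, hFH, hFH_mem⟩, hHU⟩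
  · rintro ⟨⟨hH, hFH, hFH_mem⟩, hHU⟩
    exact ⟨⟨hH, hHU⟩, hFH, hFH_mem, fun x hx => hx.elim (hF.2 x) (hHU x)⟩

theorem SimpleEquiv.append_left {γ γ' : List V} (A : List V) (h : SimpleEquiv Γ γ γ') :
    SimpleEquiv Γ (A ++ γ) (A ++ γ') := by
  obtain ⟨a, b, x, y, z, hxyz⟩ := h
  simpa only [List.append_assoc] using SimpleEquiv.contract (A ++ a) b x y z hxyz

theorem EdgeEquiv.append_left {γ γ' : List V} (A : List V) (h : EdgeEquiv Γ γ γ') :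
    EdgeEquiv Γ (A ++ γ) (A ++ γ') :=
  h.map (A ++ ·) fun _ _ => SimpleEquiv.append_left A

theorem EdgeEquiv.mono {Γ' : Set (Finset V)} (hΓ : Γ ⊆ Γ') {γ γ' : List V}
    (h : EdgeEquiv Γ γ γ') : EdgeEquiv Γ' γ γ' :=
  h.map id fun _ _ ⟨a, b, x, y, z, hxyz⟩ => .contract a b x y z (hΓ hxyz)

theorem SimpleEquiv.edgePathFrom_iff (hdown : ∀ F ∈ Γ, ∀ G ⊆ F, G ∈ Γ) {γ γ' : List V}
    (h : SimpleEquiv Γ γ γ') (v w : V) : EdgePathFrom Γ γ v w ↔ EdgePathFrom Γ γ' v w := by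
  obtain ⟨a, b, x, y, z, hxyz⟩ := h
  have hxy : ({x, y} : Finset V) ∈ Γ := hdown _ hxyz _ (by grind)
  have hyz : ({y, z} : Finset V) ∈ Γ := hdown _ hxyz _ (by grind)
  have hxz : ({x, z} : Finset V) ∈ Γ := hdown _ hxyz _ (by grind)
  have hpath : IsEdgePath Γ (a ++ x :: y :: z :: b) ↔ IsEdgePath Γ (a ++ x :: z :: b) := by
    simp only [IsEdgePath, List.Chain', List.isChain_append, List.isChain_cons_cons,
      List.length_append, List.length_cons, List.head?_cons, Option.mem_def, Option.some.injEq]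
    grind
  simp [EdgePathFrom, hpath, List.head?_append, List.getLast?_append]

theorem EdgeEquiv.edgePathFrom_iff (hdown : ∀ F ∈ Γ, ∀ G ⊆ F, G ∈ Γ) {γ γ' : List V}
    (h : EdgeEquiv Γ γ γ') (v w : V) : EdgePathFrom Γ γ v w ↔ EdgePathFrom Γ γ' v w :=
  Iff.of_eq (h.eq_of_forall_rel_eq (EdgePathFrom Γ · v w) fun _ _ hs =>
    propext (hs.edgePathFrom_iff hdown v w))

theorem EdgePathFrom.exists_eq_cons {γ : List V} {v w : V} (h : EdgePathFrom Γ γ v w) :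
    ∃ l, γ = v :: l ∧ List.IsChain (fun a b => ({a, b} : Finset V) ∈ Γ) (v :: l) ∧
      (v :: l).getLast (List.cons_ne_nil v l) = w := by
  obtain ⟨⟨-, hchain⟩, hhead, hlast⟩ := h
  obtain _ | ⟨a, l⟩ := γ
  · simp at hhead
  obtain rfl : a = v := by simpa using hhead
  exact ⟨l, rfl, hchain, by simpa [List.getLast?_eq_some_getLast] using hlast⟩

theorem EdgePathFrom.reflTransGen {γ : List V} {v w : V} (h : EdgePathFrom Γ γ v w) :
    ReflTransGen (fun a b => ({a, b} : Finset V) ∈ Γ) v w := by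
  obtain ⟨l, -, hchain, hlast⟩ := h.exists_eq_cons
  exact List.relationReflTransGen_of_exists_isChain_cons l hchain hlast

theorem IsBalanced.exists_edgeEquiv_detour (hbal : IsBalanced Γ κ) {u x y : V}
    (hxy : ReflTransGen (fun a b => ({a, b} : Finset V) ∈ link Γ {u}) x y)
    (huy : ({u, y} : Finset V) ∈ Γ) (B : List V) :
    ∃ l, EdgeEquiv Γ (x :: u :: y :: B) (x :: l ++ y :: B) ∧ ∀ z ∈ l, κ z ≠ κ u := by
  induction hxy using ReflTransGen.head_induction_on with
  | refl =>
    refine ⟨[], .rel _ _ (.contract [] B y u y ?_), by simp⟩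
    simpa [Finset.pair_comm] using huy
  | @head x w hxw _ ih =>
    obtain ⟨l, hl, hlu⟩ := ih
    obtain ⟨-, hdisj, hxwu⟩ := hxw
    have hxwu' : ({x, w, u} : Finset V) ∈ Γ := by
      convert hxwu using 1
      grind
    have hwu : w ≠ u := fun hwu =>
      Finset.disjoint_left.1 hdisj (Finset.mem_singleton_self u) (by simp [hwu])
    have hκwu : κ w ≠ κ u := fun hκ => hwu (hbal _ hxwu (by simp) (by simp) hκ)
    refine ⟨w :: l, ?_, by simpa [hκwu] using hlu⟩
    exact (EqvGen.rel _ _ (.contract [] (y :: B) x w u hxwu')).symm.trans _ _ _ <|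
      hl.append_left [x]

end Complex

/-- Properties (II) and (III) for a complex whose colours lie in `T`, with `T.card` in the role
of `d`; unlike the hypotheses on `Δ`, they pass to links and rank selections. -/
structure IsLinkConnBalanced {V : Type*} [DecidableEq V] {d : ℕ} (κ : V → Fin d)
    (Γ : Set (Finset V)) (T : Finset (Fin d)) : Prop where
  down_closed : ∀ F ∈ Γ, ∀ G ⊆ F, G ∈ Γ
  color_mem : ∀ F ∈ Γ, ∀ x ∈ F, κ x ∈ T
  balanced : IsBalanced Γ κ
  link_conn : ∀ F ∈ Γ, F.card < T.card - 1 → Conn (link Γ F)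

namespace IsLinkConnBalanced

variable {V : Type*} [DecidableEq V] {d : ℕ} {κ : V → Fin d} {Γ : Set (Finset V)}
  {T : Finset (Fin d)}

theorem card_sdiff_image (h : IsLinkConnBalanced κ Γ T) {F : Finset V} (hF : F ∈ Γ) :
    (T \ F.image κ).card = T.card - F.card := by
  rw [Finset.card_sdiff_of_subset (Finset.image_subset_iff.2 (h.color_mem F hF)),
    Finset.card_image_of_injOn (h.balanced F hF)]

protected theorem link (h : IsLinkConnBalanced κ Γ T) {F : Finset V} (hF : F ∈ Γ) :
    IsLinkConnBalanced κ (link Γ F) (T \ F.image κ) where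
  down_closed G hG G' hG' := ⟨h.down_closed G hG.1 G' hG', hG.2.1.mono_right hG',
    h.down_closed _ hG.2.2 _ (Finset.union_subset_union_right hG')⟩
  color_mem G hG x hx := by
    refine Finset.mem_sdiff.2 ⟨h.color_mem G hG.1 x hx, fun hxF => ?_⟩
    obtain ⟨y, hy, hyx⟩ := Finset.mem_image.1 hxF
    obtain rfl : y = x := h.balanced _ hG.2.2 (by simp [hy]) (by simp [hx]) hyx
    exact Finset.disjoint_left.1 hG.2.1 hy hx
  balanced G hG := h.balanced G hG.1
  link_conn G hG hcard := by
    rw [link_link h.down_closed hG]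
    refine h.link_conn _ hG.2.2 ?_
    rw [Finset.card_union_of_disjoint hG.2.1]
    rw [h.card_sdiff_image hF] at hcard
    omega

theorem exists_edgeEquiv_forall_ne (h : IsLinkConnBalanced κ Γ T) (h3 : 3 ≤ T.card) (c : Fin d) :
    ∀ (x : V) (B : List V), List.IsChain (fun a b => ({a, b} : Finset V) ∈ Γ) (x :: B) →
      κ x ≠ c → κ ((x :: B).getLast (List.cons_ne_nil x B)) ≠ c →
      ∃ B', EdgeEquiv Γ (x :: B) (x :: B') ∧ ∀ z ∈ B', κ z ≠ c
  | _, [], _, _, _ => ⟨[], .refl _, by simp⟩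
  | _, [u], _, _, hlast => ⟨[u], .refl _, by simpa using hlast⟩
  | x, u :: y :: B, hchain, hx, hlast => by
    have hxu : ({x, u} : Finset V) ∈ Γ := (List.isChain_cons_cons.1 hchain).1
    by_cases hu : κ u = c
    swap
    · obtain ⟨B', hB', hB'c⟩ :=
        exists_edgeEquiv_forall_ne h h3 c u (y :: B) hchain.tail hu (by simpa using hlast)
      exact ⟨u :: B', hB'.append_left [x], List.forall_mem_cons.2 ⟨hu, hB'c⟩⟩
    have huy : ({u, y} : Finset V) ∈ Γ := (List.isChain_cons_cons.1 hchain.tail).1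
    by_cases hy : κ y = c
    · obtain rfl : y = u := h.balanced _ huy (by simp) (by simp) (hy.trans hu.symm)
      have hstep : EdgeEquiv Γ (x :: y :: y :: B) (x :: y :: B) :=
        .rel _ _ (.contract [] B x y y (by simpa using hxu))
      obtain ⟨B', hB', hB'c⟩ := exists_edgeEquiv_forall_ne h h3 c x (y :: B)
        (List.isChain_cons_cons.2 ⟨hxu, hchain.tail.tail⟩) hx (by simpa using hlast)
      exact ⟨B', hstep.trans _ _ _ hB', hB'c⟩
    · have hlink := h.link_conn {u} (h.down_closed _ hxu _ (by simp)) (by simp; omega)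
      have hx_link := singleton_mem_link_singleton h.down_closed
        (fun hxu : x = u => hx (by rwa [hxu])) hxu
      have hy_link := singleton_mem_link_singleton h.down_closed
        (fun hyu : y = u => hy (by rwa [hyu])) (by rwa [Finset.pair_comm])
      obtain ⟨l, hl, hlc⟩ :=
        h.balanced.exists_edgeEquiv_detour (hlink x y hx_link hy_link) huy B
      obtain ⟨B', hB', hB'c⟩ :=
        exists_edgeEquiv_forall_ne h h3 c y B hchain.tail.tail hy (by simpa using hlast)
      refine ⟨l ++ y :: B', hl.trans _ _ _ (hB'.append_left (x :: l)), ?_⟩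
      simp only [List.mem_append, List.mem_cons]
      rintro z (hz | rfl | hz)
      exacts [hu ▸ hlc z hz, hy, hB'c z hz]
termination_by _ B => B.length

theorem exists_edgeEquiv_rankSel_erase (h : IsLinkConnBalanced κ Γ T) (h3 : 3 ≤ T.card)
    {c : Fin d} {γ : List V} {v w : V} (hγ : EdgePathFrom Γ γ v w) (hv : κ v ≠ c)
    (hw : κ w ≠ c) :
    ∃ γ', EdgePathFrom (rankSel Γ κ (T.erase c)) γ' v w ∧ EdgeEquiv Γ γ γ' := by
  obtain ⟨B, rfl, hchain, hlast⟩ := hγ.exists_eq_cons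
  obtain ⟨B', hB', hB'c⟩ := h.exists_edgeEquiv_forall_ne h3 c v B hchain hv (hlast ▸ hw)
  obtain ⟨⟨hlen, hchain'⟩, hhead, hlast'⟩ := (hB'.edgePathFrom_iff h.down_closed v w).1 hγ
  have hne : ∀ z ∈ v :: B', κ z ≠ c := List.forall_mem_cons.2 ⟨hv, hB'c⟩
  refine ⟨v :: B', ⟨⟨hlen, hchain'.imp_of_mem_imp fun a b ha hb hab => ⟨hab, ?_⟩⟩, hhead, hlast'⟩,
    hB'⟩
  intro z hz
  refine Finset.mem_erase.2 ⟨?_, h.color_mem _ hab z hz⟩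
  rcases Finset.mem_insert.1 hz with rfl | hz
  exacts [hne z ha, Finset.mem_singleton.1 hz ▸ hne b hb]

theorem conn_rankSel_erase (h : IsLinkConnBalanced κ Γ T) (h3 : 3 ≤ T.card) (c : Fin d) :
    Conn (rankSel Γ κ (T.erase c)) := by
  intro v w hv hw
  have hconn : Conn Γ := by
    simpa [link_empty] using h.link_conn ∅ (h.down_closed _ hv.1 ∅ (Finset.empty_subset _))
      (by simp; omega)
  obtain ⟨l, hchain, hlast⟩ :=
    List.exists_isChain_cons_of_relationReflTransGen (hconn v w hv.1 hw.1)
  have hγ : EdgePathFrom Γ (v :: v :: l) v w :=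
    ⟨⟨by simp, List.IsChain.cons_cons (by simpa using hv.1) hchain⟩, rfl,
      by simp [List.getLast?_eq_some_getLast, hlast]⟩
  obtain ⟨γ', hγ', -⟩ := h.exists_edgeEquiv_rankSel_erase h3 hγ
    (Finset.mem_erase.1 (hv.2 v (Finset.mem_singleton_self v))).1
    (Finset.mem_erase.1 (hw.2 w (Finset.mem_singleton_self w))).1
  exact hγ'.reflTransGen

theorem rankSel_erase (h : IsLinkConnBalanced κ Γ T) {c : Fin d} (hc : c ∈ T) :
    IsLinkConnBalanced κ (rankSel Γ κ (T.erase c)) (T.erase c) where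
  down_closed F hF G hG := ⟨h.down_closed F hF.1 G hG, fun x hx => hF.2 x (hG hx)⟩
  color_mem F hF := hF.2
  balanced F hF := h.balanced F hF.1
  link_conn F hF hcard := by
    have hlink := h.link hF.1
    rw [link_rankSel hF, ← rankSel_inter_of_color_mem hlink.color_mem]
    convert hlink.conn_rankSel_erase ?_ c using 2
    · ext a
      simp only [Finset.mem_inter, Finset.mem_erase, Finset.mem_sdiff]
      tauto
    · rw [h.card_sdiff_image hF.1]
      rw [Finset.card_erase_of_mem hc] at hcard
      omega

theorem exists_edgeEquiv_rankSel {Γ : Set (Finset V)} {T : Finset (Fin d)}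
    (h : IsLinkConnBalanced κ Γ T) {S : Finset (Fin d)}
    (hST : S ⊆ T) (hS : 2 ≤ S.card) {γ : List V} {v w : V} (hγ : EdgePathFrom Γ γ v w)
    (hv : κ v ∈ S) (hw : κ w ∈ S) :
    ∃ γ', EdgePathFrom (rankSel Γ κ S) γ' v w ∧ EdgeEquiv Γ γ γ' := by
  by_cases hTS : T ⊆ S
  · refine ⟨γ, ⟨⟨hγ.1.1, hγ.1.2.imp fun a b hab => ⟨hab, ?_⟩⟩, hγ.2⟩, .refl γ⟩
    exact fun x hx => hTS (h.color_mem _ hab x hx)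
  obtain ⟨c, hcT, hcS⟩ := Finset.not_subset.1 hTS
  have h3 : 3 ≤ T.card := by
    have := Finset.card_le_card (Finset.insert_subset hcT hST)
    rw [Finset.card_insert_of_notMem hcS] at this
    omega
  obtain ⟨γ₁, hγ₁, hγγ₁⟩ := h.exists_edgeEquiv_rankSel_erase h3 hγ
    (fun hvc : κ v = c => hcS (hvc ▸ hv)) (fun hwc : κ w = c => hcS (hwc ▸ hw))
  have hSc : S ⊆ T.erase c := Finset.subset_erase.2 ⟨hST, hcS⟩
  obtain ⟨γ', hγ', hγ₁γ'⟩ := exists_edgeEquiv_rankSel (h.rankSel_erase hcT) hSc hS hγ₁ hv hw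
  rw [rankSel_rankSel hSc] at hγ'
  exact ⟨γ', hγ', hγγ₁.trans _ _ _ (hγ₁γ'.mono fun _ hF => hF.1)⟩
termination_by T.card
decreasing_by exact Finset.card_erase_lt_of_mem hcT

end IsLinkConnBalanced

theorem edgePath_equiv_rankSel_general {V : Type*} [DecidableEq V] (d : ℕ)
    (Δ : Set (Finset V)) (κ : V → Fin d)
    (hcplx : IsComplex Δ) (hII : IsBalanced Δ κ) (hIII : LinksConn Δ d)
    (S : Finset (Fin d)) (hS : S.card = 2)
    (v v' : V) (hv : ({v} : Finset V) ∈ rankSel Δ κ S)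
    (hv' : ({v'} : Finset V) ∈ rankSel Δ κ S)
    (γ : List V) (hγ : EdgePathFrom Δ γ v v') :
    ∃ γ' : List V, EdgePathFrom (rankSel Δ κ S) γ' v v' ∧ EdgeEquiv Δ γ γ' := by
  have hΔ : IsLinkConnBalanced κ Δ Finset.univ :=
    { down_closed := hcplx.1
      color_mem := fun _ _ _ _ => Finset.mem_univ _
      balanced := hII
      link_conn := fun F hF hcard => hIII F hF (by simpa using hcard) }
  exact hΔ.exists_edgeEquiv_rankSel (Finset.subset_univ S) hS.ge hγ
    (hv.2 v (Finset.mem_singleton_self v)) (hv'.2 v' (Finset.mem_singleton_self v'))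

/-- If `Δ` is a `(d-1)`-dimensional simplicial complex, `d ≥ 2`,
satisfying properties (I)–(III), `S` a set of two colors, and `v, v'` are vertices of
`Δ_S`, then every edge path in `Δ` from `v` to `v'` is equivalent to an edge path from
`v` to `v'` all of whose edges lie in `Δ_S`. -/
theorem edgePath_equiv_rankSel {V : Type*} [Fintype V] [DecidableEq V] (d : ℕ)
    (hd : 2 ≤ d) (Δ : Set (Finset V)) (κ : V → Fin d)
    (hcplx : IsComplex Δ) (hdim : HasDim Δ d)
    (hI : IsPure Δ d) (hII : IsBalanced Δ κ) (hIII : LinksConn Δ d)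
    (S : Finset (Fin d)) (hS : S.card = 2)
    (v v' : V) (hv : ({v} : Finset V) ∈ rankSel Δ κ S)
    (hv' : ({v'} : Finset V) ∈ rankSel Δ κ S)
    (γ : List V) (hγ : EdgePathFrom Δ γ v v') :
    ∃ γ' : List V, EdgePathFrom (rankSel Δ κ S) γ' v v' ∧ EdgeEquiv Δ γ γ' :=
  edgePath_equiv_rankSel_general d Δ κ hcplx hII hIII S hS v v' hv hv' γ hγ
end

section
/- Let P be a simplicial poset of rank d ≥ 2 satisfying properties (i)–(iii). Then for any S ⊆ {1,…,d} with |S| = 2, the rank-selected poset P_S is connected: any two vertices of P_S can be joined by a path of rank-2 elements of P whose two vertices both have colors in S. -/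
/-- `P` (a finite poset with least element `⊥`) is a simplicial poset with rank
function `rk`: every lower interval `[⊥, x]` is isomorphic to the Boolean lattice of
subsets of an `rk x`-element set. -/
def IsSimplicialPoset (P : Type*) [PartialOrder P] [OrderBot P] (rk : P → ℕ) : Prop :=
  ∀ x : P, Nonempty (Set.Icc (⊥ : P) x ≃o Finset (Fin (rk x)))

/-- `P` has rank `d`. -/
def PosetRank {P : Type*} (rk : P → ℕ) (d : ℕ) : Prop :=
  (∀ x : P, rk x ≤ d) ∧ ∃ x : P, rk x = d

/-- Property (i): `P` is pure, i.e. every facet (maximal element) has rank `d`. -/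
def PosetPure {P : Type*} [PartialOrder P] (rk : P → ℕ) (d : ℕ) : Prop :=
  ∀ x : P, IsMax x → rk x = d

/-- Property (ii): `P` is balanced with respect to the coloring `κ` of its vertices
by `d` colors: distinct vertices lying below a common facet receive distinct colors. -/
def PosetBalanced {P : Type*} [PartialOrder P] {d : ℕ} (rk : P → ℕ) (κ : P → Fin d) :
    Prop :=
  ∀ σ : P, IsMax σ → ∀ v w : P, rk v = 1 → rk w = 1 → v ≤ σ → w ≤ σ → v ≠ w → κ v ≠ κ w

/-- The link `lk_P τ = {σ ∈ P : σ ≥ τ}` is connected: any two of its vertices (the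
elements of rank `rk τ + 1` above `τ`) are joined by a path of rank-2 elements of the
link (the elements of rank `rk τ + 2` above `τ`). -/
def ConnAbove {P : Type*} [PartialOrder P] (rk : P → ℕ) (τ : P) : Prop :=
  ∀ v w : P, τ < v → rk v = rk τ + 1 → τ < w → rk w = rk τ + 1 →
    Relation.ReflTransGen
      (fun a b => τ < a ∧ τ < b ∧ rk a = rk τ + 1 ∧ rk b = rk τ + 1 ∧
        ∃ e : P, a ≤ e ∧ b ≤ e ∧ rk e = rk τ + 2) v w

/-- Property (iii): the link of every face of rank `< d - 1` (including `⊥`, so in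
particular `P` itself) is connected. -/
def PosetLinksConn {P : Type*} [PartialOrder P] (rk : P → ℕ) (d : ℕ) : Prop :=
  ∀ σ : P, rk σ < d - 1 → ConnAbove rk σ


/-! Fix colours `a ≠ b` in `S` and call facets `F`, `G` linked when every vertex of colour `a`
below `F` is joined in `P_S` to every vertex of colour `a` below `G`. By downward induction on
`rk τ`, any two facets above `τ` are linked. If `τ` has rank `d - 1`, balancedness leaves it
vertices of all colours but one: either `τ` has the `a`-vertex, which is then the `a`-vertex of
both facets, or it has the `b`-vertex, a common neighbour of the two `a`-vertices. Otherwise a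
path in the connected link of `τ` yields a chain of facets above `τ` in which consecutive facets
lie above a common face of rank `rk τ + 1`, and the induction hypothesis links them. For `τ = ⊥`
this joins any two `a`-vertices, and a vertex of colour `b` is adjacent to the `a`-vertex of any
facet above it. -/

open Finset Relation

theorem exists_le_isMax {P : Type*} [PartialOrder P] [Finite P] (x : P) :
    ∃ F, x ≤ F ∧ IsMax F := by
  obtain ⟨F, hxF, hF⟩ := Finite.exists_le_maximal (p := fun _ : P => True) trivial
  exact ⟨F, hxF, fun y hy => hF.2 trivial hy⟩

namespace IsSimplicialPoset

variable {P : Type*} [PartialOrder P] [OrderBot P] {rk : P → ℕ}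

theorem natCard_Icc (hSP : IsSimplicialPoset P rk) (x : P) :
    Nat.card (Set.Icc (⊥ : P) x) = 2 ^ rk x := by
  obtain ⟨f⟩ := hSP x
  rw [Nat.card_congr f.toEquiv]
  simp

theorem rk_bot (hSP : IsSimplicialPoset P rk) : rk ⊥ = 0 := by
  simpa [Nat.pow_eq_one] using (hSP.natCard_Icc ⊥).symm

theorem rk_coe_eq_card (hSP : IsSimplicialPoset P rk) {x : P}
    (f : Set.Icc (⊥ : P) x ≃o Finset (Fin (rk x))) (y : Set.Icc (⊥ : P) x) :
    rk y = #(f y) := by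
  have e : Set.Icc (⊥ : P) y ≃ Iic (f y) :=
    calc Set.Icc (⊥ : P) y ≃ {p : P // p ≤ y} := Equiv.subtypeEquivRight fun _ => by simp
      _ ≃ {z : Set.Icc (⊥ : P) x // z.1 ≤ y} :=
          (Equiv.subtypeSubtypeEquivSubtype fun h => ⟨bot_le, h.trans y.2.2⟩).symm
      _ ≃ Iic (f y) := f.toEquiv.subtypeEquiv fun z => by simp
  apply Nat.pow_right_injective le_rfl
  simp only [← hSP.natCard_Icc, Nat.card_congr e, Nat.card_eq_fintype_card, Fintype.card_coe,
    card_Iic_finset]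

theorem rk_symm_apply (hSP : IsSimplicialPoset P rk) {x : P}
    (f : Set.Icc (⊥ : P) x ≃o Finset (Fin (rk x))) (t : Finset (Fin (rk x))) :
    rk (f.symm t) = #t := by
  rw [hSP.rk_coe_eq_card f, f.apply_symm_apply]

theorem exists_lt_le_rk_eq_add_one (hSP : IsSimplicialPoset P rk) {τ F : P} (hτF : τ ≤ F)
    (h : rk τ < rk F) : ∃ v, τ < v ∧ v ≤ F ∧ rk v = rk τ + 1 := by
  obtain ⟨f⟩ := hSP F
  have ht : rk τ = #(f ⟨τ, bot_le, hτF⟩) := hSP.rk_coe_eq_card f ⟨τ, bot_le, hτF⟩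
  obtain ⟨i, hi⟩ : ∃ i, i ∉ f ⟨τ, bot_le, hτF⟩ := by
    by_contra! hall
    rw [eq_univ_iff_forall.mpr hall, card_univ, Fintype.card_fin] at ht
    omega
  refine ⟨f.symm (insert i (f ⟨τ, bot_le, hτF⟩)), ?_, (f.symm _).2.2, ?_⟩
  · exact Subtype.coe_lt_coe.mpr (f.lt_symm_apply.mpr (ssubset_insert hi))
  · rw [hSP.rk_symm_apply, card_insert_of_notMem hi, ht]

theorem exists_rk_eq_two_ge (hSP : IsSimplicialPoset P rk) {F u v : P} (hu : u ≤ F)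
    (hv : v ≤ F) (hu1 : rk u = 1) (hv1 : rk v = 1) (huv : u ≠ v) :
    ∃ e, rk e = 2 ∧ u ≤ e ∧ v ≤ e := by
  obtain ⟨f⟩ := hSP F
  obtain ⟨i, hi⟩ : ∃ i, f ⟨u, bot_le, hu⟩ = {i} :=
    card_eq_one.mp ((hSP.rk_coe_eq_card f _).symm.trans hu1)
  obtain ⟨j, hj⟩ : ∃ j, f ⟨v, bot_le, hv⟩ = {j} :=
    card_eq_one.mp ((hSP.rk_coe_eq_card f _).symm.trans hv1)
  have hij : i ≠ j := by
    rintro rfl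
    exact huv (congrArg Subtype.val (f.injective (hi.trans hj.symm)))
  refine ⟨f.symm ({i} ∪ {j}), ?_, ?_, ?_⟩
  · rw [hSP.rk_symm_apply, card_union_of_disjoint (disjoint_singleton.mpr hij), card_singleton,
      card_singleton]
  · exact f.le_symm_apply.mpr (hi.trans_subset subset_union_left)
  · exact f.le_symm_apply.mpr (hj.trans_subset subset_union_right)

theorem exists_vertices_le (hSP : IsSimplicialPoset P rk) (τ : P) :
    ∃ φ : Fin (rk τ) ↪ P, ∀ i, φ i ≤ τ ∧ rk (φ i) = 1 := by
  obtain ⟨f⟩ := hSP τ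
  refine ⟨⟨fun i => f.symm {i}, fun i j h => ?_⟩, fun i => ⟨(f.symm _).2.2, ?_⟩⟩
  · exact singleton_inj.mp (f.symm.injective (Subtype.ext h))
  · exact (hSP.rk_symm_apply f _).trans (card_singleton i)

end IsSimplicialPoset

section Balanced

variable {P : Type*} [PartialOrder P] {rk : P → ℕ} {d : ℕ} {κ : P → Fin d}

open Classical in
noncomputable def vertexColors (rk : P → ℕ) (κ : P → Fin d) (τ : P) : Finset (Fin d) :=
  {c | ∃ u ≤ τ, rk u = 1 ∧ κ u = c}

theorem mem_vertexColors {τ : P} {c : Fin d} :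
    c ∈ vertexColors rk κ τ ↔ ∃ u ≤ τ, rk u = 1 ∧ κ u = c := by
  simp [vertexColors]

theorem PosetBalanced.eq_of_color_eq (hii : PosetBalanced rk κ) {F u v : P} (hF : IsMax F)
    (hu : u ≤ F) (hv : v ≤ F) (hu1 : rk u = 1) (hv1 : rk v = 1) (h : κ u = κ v) : u = v :=
  by_contra fun hne => hii F hF u v hu1 hv1 hu hv hne h

variable [OrderBot P]

theorem PosetBalanced.rk_le_card_vertexColors (hii : PosetBalanced rk κ)
    (hSP : IsSimplicialPoset P rk) {τ F : P} (hτF : τ ≤ F) (hF : IsMax F) :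
    rk τ ≤ #(vertexColors rk κ τ) := by
  obtain ⟨φ, hφ⟩ := hSP.exists_vertices_le τ
  have hinj : Function.Injective (κ ∘ φ) := fun i j hij => φ.injective <|
    hii.eq_of_color_eq hF ((hφ i).1.trans hτF) ((hφ j).1.trans hτF) (hφ i).2 (hφ j).2 hij
  calc rk τ = #(univ.image (κ ∘ φ)) := by
        rw [card_image_of_injective _ hinj, card_univ, Fintype.card_fin]
    _ ≤ #(vertexColors rk κ τ) := card_le_card fun c hc => by
        obtain ⟨i, -, rfl⟩ := mem_image.mp hc
        exact mem_vertexColors.mpr ⟨φ i, (hφ i).1, (hφ i).2, rfl⟩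

theorem PosetBalanced.exists_vertex_le_of_isMax (hii : PosetBalanced rk κ)
    (hSP : IsSimplicialPoset P rk) (hpure : PosetPure rk d) {F : P} (hF : IsMax F) (c : Fin d) :
    ∃ u ≤ F, rk u = 1 ∧ κ u = c := by
  have hcard := hii.rk_le_card_vertexColors hSP le_rfl hF
  rw [hpure F hF] at hcard
  have huniv : vertexColors rk κ F = univ :=
    eq_univ_of_card _ (le_antisymm (card_le_univ _) (by simpa using hcard))
  exact mem_vertexColors.mp (huniv ▸ mem_univ c)

theorem PosetBalanced.mem_vertexColors_of_rk_add_one_eq (hii : PosetBalanced rk κ)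
    (hSP : IsSimplicialPoset P rk) {τ F : P} (hτF : τ ≤ F) (hF : IsMax F) (hτ : rk τ + 1 = d)
    {a b : Fin d} (hab : a ≠ b) (ha : a ∉ vertexColors rk κ τ) : b ∈ vertexColors rk κ τ := by
  by_contra hb
  have hdisj : Disjoint (vertexColors rk κ τ) {a, b} := by
    simp [disjoint_insert_right, ha, hb]
  have hle := card_le_univ (vertexColors rk κ τ ∪ {a, b})
  rw [card_union_of_disjoint hdisj, card_pair hab, Fintype.card_fin] at hle
  have := hii.rk_le_card_vertexColors hSP hτF hF
  omega

end Balanced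

section RankSelection

variable {P : Type*} [PartialOrder P] {rk : P → ℕ} {d : ℕ} {κ : P → Fin d}
  {S : Finset (Fin d)}

def RankSelAdj (rk : P → ℕ) (κ : P → Fin d) (S : Finset (Fin d)) (a b : P) : Prop :=
  rk a = 1 ∧ rk b = 1 ∧ κ a ∈ S ∧ κ b ∈ S ∧ ∃ e : P, rk e = 2 ∧ a ≤ e ∧ b ≤ e

def LinkAdj (rk : P → ℕ) (τ a b : P) : Prop :=
  τ < a ∧ τ < b ∧ rk a = rk τ + 1 ∧ rk b = rk τ + 1 ∧ ∃ e : P, a ≤ e ∧ b ≤ e ∧ rk e = rk τ + 2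

def FacetsLinked (rk : P → ℕ) (κ : P → Fin d) (S : Finset (Fin d)) (c : Fin d) (F G : P) :
    Prop :=
  ∀ u v : P, u ≤ F → rk u = 1 → κ u = c → v ≤ G → rk v = 1 → κ v = c →
    ReflTransGen (RankSelAdj rk κ S) u v

theorem facetsLinked_self (hii : PosetBalanced rk κ) {c : Fin d} {F : P} (hF : IsMax F) :
    FacetsLinked rk κ S c F F := by
  intro u v hu hu1 huc hv hv1 hvc
  rw [hii.eq_of_color_eq hF hu hv hu1 hv1 (huc.trans hvc.symm)]

variable [OrderBot P]

theorem FacetsLinked.trans (hSP : IsSimplicialPoset P rk) (hii : PosetBalanced rk κ)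
    (hpure : PosetPure rk d) {c : Fin d} {F G H : P} (hG : IsMax G)
    (hFG : FacetsLinked rk κ S c F G) (hGH : FacetsLinked rk κ S c G H) :
    FacetsLinked rk κ S c F H := by
  intro u v hu hu1 huc hv hv1 hvc
  obtain ⟨w, hw, hw1, hwc⟩ := hii.exists_vertex_le_of_isMax hSP hpure hG c
  exact (hFG u w hu hu1 huc hw hw1 hwc).trans (hGH w v hw hw1 hwc hv hv1 hvc)

theorem facetsLinked_of_rk_add_one_eq (hSP : IsSimplicialPoset P rk) (hii : PosetBalanced rk κ)
    {a b : Fin d} (ha : a ∈ S) (hb : b ∈ S) (hab : a ≠ b) {τ F G : P} (hτ : rk τ + 1 = d)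
    (hF : IsMax F) (hG : IsMax G) (hτF : τ ≤ F) (hτG : τ ≤ G) :
    FacetsLinked rk κ S a F G := by
  intro u v hu hu1 hua hv hv1 hva
  by_cases haτ : a ∈ vertexColors rk κ τ
  · obtain ⟨w, hwτ, hw1, hwa⟩ := mem_vertexColors.mp haτ
    rw [hii.eq_of_color_eq hF hu (hwτ.trans hτF) hu1 hw1 (hua.trans hwa.symm),
      hii.eq_of_color_eq hG hv (hwτ.trans hτG) hv1 hw1 (hva.trans hwa.symm)]
  · obtain ⟨w, hwτ, hw1, hwb⟩ :=
      mem_vertexColors.mp (hii.mem_vertexColors_of_rk_add_one_eq hSP hτF hF hτ hab haτ)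
    have hne : ∀ x, κ x = a → x ≠ w := fun x hx h => hab (hx.symm.trans (h ▸ hwb))
    obtain ⟨e, he, hue, hwe⟩ :=
      hSP.exists_rk_eq_two_ge hu (hwτ.trans hτF) hu1 hw1 (hne u hua)
    obtain ⟨e', he', hwe', hve'⟩ :=
      hSP.exists_rk_eq_two_ge (hwτ.trans hτG) hv hw1 hv1 (hne v hva).symm
    exact .head ⟨hu1, hw1, hua ▸ ha, hwb ▸ hb, e, he, hue, hwe⟩
      (.single ⟨hw1, hv1, hwb ▸ hb, hva ▸ ha, e', he', hwe', hve'⟩)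

theorem exists_facetsLinked_of_linkAdj [Finite P] (hSP : IsSimplicialPoset P rk)
    (hii : PosetBalanced rk κ) (hpure : PosetPure rk d) {c : Fin d} {τ : P}
    (hlink : ∀ x, τ < x → rk x = rk τ + 1 → ∀ F G, IsMax F → IsMax G → x ≤ F → x ≤ G →
      FacetsLinked rk κ S c F G)
    {F v w : P} (hF : IsMax F) (hvF : v ≤ F) (hvw : ReflTransGen (LinkAdj rk τ) v w) :
    ∃ H, IsMax H ∧ w ≤ H ∧ FacetsLinked rk κ S c F H := by
  induction hvw with
  | refl => exact ⟨F, hF, hvF, facetsLinked_self hii hF⟩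
  | tail _ hxy ih =>
    obtain ⟨H, hH, hxH, hFH⟩ := ih
    obtain ⟨hτx, -, hx, -, e, hxe, hye, -⟩ := hxy
    obtain ⟨E, heE, hE⟩ := exists_le_isMax e
    exact ⟨E, hE, hye.trans heE,
      hFH.trans hSP hii hpure hH (hlink _ hτx hx H E hH hE hxH (hxe.trans heE))⟩

theorem facetsLinked_of_connAbove [Finite P] (hSP : IsSimplicialPoset P rk)
    (hii : PosetBalanced rk κ) (hpure : PosetPure rk d) {c : Fin d} {τ : P} (hτ : rk τ < d)
    (hconn : ConnAbove rk τ)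
    (hlink : ∀ x, τ < x → rk x = rk τ + 1 → ∀ F G, IsMax F → IsMax G → x ≤ F → x ≤ G →
      FacetsLinked rk κ S c F G)
    {F G : P} (hF : IsMax F) (hG : IsMax G) (hτF : τ ≤ F) (hτG : τ ≤ G) :
    FacetsLinked rk κ S c F G := by
  obtain ⟨v, hτv, hvF, hv⟩ := hSP.exists_lt_le_rk_eq_add_one hτF (hpure F hF ▸ hτ)
  obtain ⟨w, hτw, hwG, hw⟩ := hSP.exists_lt_le_rk_eq_add_one hτG (hpure G hG ▸ hτ)
  obtain ⟨H, hH, hwH, hFH⟩ :=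
    exists_facetsLinked_of_linkAdj hSP hii hpure hlink hF hvF (hconn v w hτv hv hτw hw)
  exact hFH.trans hSP hii hpure hH (hlink w hτw hw H G hH hG hwH hwG)

theorem facetsLinked_of_rk_lt [Finite P] (hSP : IsSimplicialPoset P rk)
    (hii : PosetBalanced rk κ) (hpure : PosetPure rk d) (hconn : PosetLinksConn rk d)
    {a b : Fin d} (ha : a ∈ S) (hb : b ∈ S) (hab : a ≠ b) {τ : P} (hτ : rk τ < d) :
    ∀ F G, IsMax F → IsMax G → τ ≤ F → τ ≤ G → FacetsLinked rk κ S a F G := by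
  induction hn : d - rk τ using Nat.strong_induction_on generalizing τ with
  | _ n ih =>
    rcases (by omega : rk τ + 1 = d ∨ rk τ + 1 < d) with hridge | hlt
    · exact fun F G => facetsLinked_of_rk_add_one_eq hSP hii ha hb hab hridge
    · exact fun F G => facetsLinked_of_connAbove hSP hii hpure hτ (hconn τ (by omega))
        fun x hτx hx => ih (d - rk x) (by omega) (by omega) rfl

end RankSelection

theorem posetRankSel_connected_general {P : Type*} [Fintype P] [PartialOrder P] [OrderBot P]
    (rk : P → ℕ) (d : ℕ) (hd : 2 ≤ d) (κ : P → Fin d)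
    (hSP : IsSimplicialPoset P rk)
    (hi : PosetPure rk d) (hii : PosetBalanced rk κ) (hiii : PosetLinksConn rk d)
    (S : Finset (Fin d)) (hS : S.card = 2) :
    ∀ v w : P, rk v = 1 → κ v ∈ S → rk w = 1 → κ w ∈ S →
      Relation.ReflTransGen
        (fun a b => rk a = 1 ∧ rk b = 1 ∧ κ a ∈ S ∧ κ b ∈ S ∧
          ∃ e : P, rk e = 2 ∧ a ≤ e ∧ b ≤ e) v w := by
  intro v w hv hvS hw hwS
  obtain ⟨b, hbS, hbw⟩ := S.exists_mem_ne (by omega) (κ w)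
  obtain ⟨F, hvF, hF⟩ := exists_le_isMax v
  obtain ⟨G, hwG, hG⟩ := exists_le_isMax w
  obtain ⟨u, huF, hu, huw⟩ := hii.exists_vertex_le_of_isMax hSP hi hF (κ w)
  have hu_w : ReflTransGen (RankSelAdj rk κ S) u w :=
    facetsLinked_of_rk_lt (τ := ⊥) hSP hii hi hiii hwS hbS hbw.symm (by rw [hSP.rk_bot]; omega)
      F G hF hG bot_le bot_le u w huF hu huw hwG hw rfl
  have hv_u : ReflTransGen (RankSelAdj rk κ S) v u := by
    by_cases hvu : v = u
    · rw [hvu]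
    · obtain ⟨e, he, hve, hue⟩ := hSP.exists_rk_eq_two_ge hvF huF hv hu hvu
      exact .single ⟨hv, hu, hvS, huw ▸ hwS, e, he, hve, hue⟩
  exact hv_u.trans hu_w

/-- If `P` is a simplicial poset of rank `d ≥ 2` satisfying
properties (i)–(iii), then for every set `S` of two colors the rank-selected poset
`P_S` is connected: any two vertices of `P_S` are joined by a path of rank-2 elements
of `P` whose two vertices both have colors in `S`. -/
theorem posetRankSel_connected {P : Type*} [Fintype P] [PartialOrder P] [OrderBot P]
    (rk : P → ℕ) (d : ℕ) (hd : 2 ≤ d) (κ : P → Fin d)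
    (hSP : IsSimplicialPoset P rk) (hrk : PosetRank rk d)
    (hi : PosetPure rk d) (hii : PosetBalanced rk κ) (hiii : PosetLinksConn rk d)
    (S : Finset (Fin d)) (hS : S.card = 2) :
    ∀ v w : P, rk v = 1 → κ v ∈ S → rk w = 1 → κ w ∈ S →
      Relation.ReflTransGen
        (fun a b => rk a = 1 ∧ rk b = 1 ∧ κ a ∈ S ∧ κ b ∈ S ∧
          ∃ e : P, rk e = 2 ∧ a ≤ e ∧ b ≤ e) v w :=
  posetRankSel_connected_general rk d hd κ hSP hi hii hiii S hS
end
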